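/- arXiv:2407.21249 — 2 statements merged into one kernel-verified Lean document; each statement's English description precedes it below -/
import Mathlib

section
/- Let H be a subgroup of the direct product G₁ × G₂ × ... × G_r of groups such that for every pair of indices i < j, the projection of H onto G_i × G_j is surjective. If each G_i is a perfect group (equal to its own commutator subgroup), then H = G₁ × G₂ × ... × G_r. -/
/-!
Fix a coordinate `j`. A commutator of an element trivial on `S` with one trivial on `T` is
trivial on `S ∪ T`, so the `j`-th coordinates of elements of `H` trivial on `S ∪ T` contain the
commutators of those trivial on `S` with those trivial on `T`. Pairwise surjectivity makes the
latter all of `G j` when `S` and `T` are singletons, and as `G j` is perfect, induction on `S`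
gives all of `G j` for `S` the set of all indices other than `j`. Hence `H` contains every
element supported on a single coordinate, and these generate the product.
-/

open scoped commutatorElement

section

variable {ι : Type*} {G : ι → Type*} [∀ i, Group (G i)]

theorem Subgroup.commutator_pi_bot_le (S T : Set ι) :
    ⁅pi S fun i => (⊥ : Subgroup (G i)), pi T fun i => (⊥ : Subgroup (G i))⁆ ≤
      pi (S ∪ T) fun _ => ⊥ := by
  rw [commutator_le]
  intro x hx y hy i hi
  change _ ∈ (⊥ : Subgroup (G i))
  rw [mem_bot, ← Pi.evalMonoidHom_apply G i ⁅x, y⁆, map_commutatorElement]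
  rcases hi with hi | hi
  · simp [mem_bot.mp (hx i hi)]
  · simp [mem_bot.mp (hy i hi)]

def Subgroup.coordOfTrivialOn (H : Subgroup (∀ i, G i)) (j : ι) (S : Set ι) :
    Subgroup (G j) :=
  (H ⊓ pi S fun _ => ⊥).map (Pi.evalMonoidHom G j)

theorem Subgroup.commutator_coordOfTrivialOn_le (H : Subgroup (∀ i, G i)) (j : ι)
    (S T : Set ι) :
    ⁅H.coordOfTrivialOn j S, H.coordOfTrivialOn j T⁆ ≤ H.coordOfTrivialOn j (S ∪ T) := by
  unfold coordOfTrivialOn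
  rw [← map_commutator]
  refine map_mono (le_inf ?_ ?_)
  · exact (commutator_mono inf_le_left inf_le_left).trans (commutator_le_self H)
  · exact (commutator_mono inf_le_right inf_le_right).trans (commutator_pi_bot_le S T)

theorem Subgroup.coordOfTrivialOn_eq_top {H : Subgroup (∀ i, G i)} {j : ι}
    (hperf : _root_.commutator (G j) = ⊤) {S : Finset ι}
    (hsingle : ∀ k ∈ S, H.coordOfTrivialOn j {k} = ⊤) (hS : S.Nonempty) :
    H.coordOfTrivialOn j S = ⊤ := by
  induction hS using Finset.Nonempty.cons_induction with
  | singleton k => simpa using hsingle k (Finset.mem_singleton_self k)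
  | cons k S hk _ ih =>
    rw [Finset.forall_mem_cons] at hsingle
    have hglue := commutator_coordOfTrivialOn_le H j {k} S
    rw [hsingle.1, ih hsingle.2, ← _root_.commutator_def, hperf, top_le_iff] at hglue
    rwa [Finset.coe_cons, Set.insert_eq]

end

/-- **Serre's lemma.** If `H` is a subgroup of a finite direct product of groups
`G i` such that for every pair of distinct indices `i ≠ j` the projection of `H`
onto `G i × G j` is surjective, and each `G i` is perfect (equal to its own
commutator subgroup), then `H` is the whole product. -/
theorem serre_lemma {ι : Type*} [Finite ι] (hcard : 2 ≤ Nat.card ι)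
    (G : ι → Type*) [∀ i, Group (G i)]
    (hperf : ∀ i, commutator (G i) = ⊤)
    (H : Subgroup (∀ i, G i))
    (hproj : ∀ i j, i ≠ j → ∀ (a : G i) (b : G j), ∃ h ∈ H, h i = a ∧ h j = b) :
    H = ⊤ := by
  classical
  have := Fintype.ofFinite ι
  have : Nontrivial ι := Finite.one_lt_card_iff_nontrivial.mp hcard
  have hsingle (j k : ι) (hkj : k ≠ j) : H.coordOfTrivialOn j {k} = ⊤ := by
    refine eq_top_iff.mpr fun g _ => ?_
    obtain ⟨h, hH, hj, hk⟩ := hproj j k hkj.symm g 1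
    exact ⟨h, ⟨hH, by simpa [Subgroup.mem_pi] using hk⟩, hj⟩
  have hmulSingle (j : ι) (g : G j) : Pi.mulSingle j g ∈ H := by
    obtain ⟨h, ⟨hH, htriv⟩, hj⟩ := (Subgroup.coordOfTrivialOn_eq_top (hperf j)
      (S := Finset.univ.erase j) (fun k hk => hsingle j k (Finset.ne_of_mem_erase hk))
      Finset.univ_nontrivial.erase_nonempty).ge (Subgroup.mem_top g)
    suffices h = Pi.mulSingle j g from this ▸ hH
    ext k
    obtain rfl | hkj := eq_or_ne k j
    · simpa using hj
    · simpa [hkj] using Subgroup.mem_bot.mp (htriv k (by simpa using hkj))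
  exact eq_top_iff.mpr fun x _ => Subgroup.pi_mem_of_mulSingle_mem x fun j => hmulSingle j (x j)
end

section
/- Let H = H₁ ⊕ H₂ be an orthogonal decomposition of a finite-dimensional complex inner product space with dim H₁ = d₁ ≥ d₂ = dim H₂ ≥ 1. The real Lie algebra generated (under real linear combinations and commutators) by all operators of the form |ψ₁⟩⟨ψ₂| − |ψ₂⟩⟨ψ₁| with ψ₁ ∈ H₁, ψ₂ ∈ H₂ equals su(H), the Lie algebra of all traceless anti-Hermitian operators on H. -/
/-- The rank-one operator `|ψ⟩⟨φ| : x ↦ ⟨φ, x⟩ ψ` on a complex inner product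
space. -/
noncomputable def ketBra {E : Type*} [NormedAddCommGroup E] [InnerProductSpace ℂ E]
    [CompleteSpace E] (ψ φ : E) : Module.End ℂ E :=
  (((innerSL ℂ φ).smulRight ψ : E →L[ℂ] E) : E →ₗ[ℂ] E)

attribute [local instance] LieRing.ofAssociativeRing

/-!
In an orthonormal basis `b` of `E` whose vectors lie in `H₁` or in `H₁ᗮ`, every skew-adjoint `X`
satisfies `2 • X = ∑ p q, A (⟪b p, X (b q)⟫ • b p) (b q)` with `A x y = |x⟩⟨y| - |y⟩⟨x|`, so it is
enough to generate the off-diagonal terms and the traceless diagonal part. The generators are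
exactly the mixed terms `A x y` with `x ∈ H₁`, `y ∈ H₁ᗮ`; a term with both vectors in the same
summand is the commutator `⁅A c f, A a f⁆ = A a c` through a unit vector `f` of the other summand.
Finally the commutators
`⁅A a b, A (w • a) b⁆ = A (w • a) a - A (w • b) b` of off-diagonal terms span the traceless
diagonal part.
-/

open LinearMap InnerProductSpace

lemma Submodule.exists_orthonormalBasis_mem_or_mem_orthogonal {𝕜 E : Type*} [RCLike 𝕜]
    [NormedAddCommGroup E] [InnerProductSpace 𝕜 E] [FiniteDimensional 𝕜 E] (K : Submodule 𝕜 E) :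
    ∃ (ι : Type) (_ : Fintype ι) (b : OrthonormalBasis ι 𝕜 E), ∀ i, b i ∈ K ∨ b i ∈ Kᗮ := by
  let V : Bool → Submodule 𝕜 E := fun t => bif t then K else Kᗮ
  have hV : OrthogonalFamily 𝕜 (fun t => V t) fun t => (V t).subtypeₗᵢ := by
    refine orthogonalFamily_iff_pairwise.mpr ?_
    rintro (_ | _) (_ | _) h
    all_goals first
      | exact absurd rfl h
      | exact K.isOrtho_orthogonal_right
      | exact K.isOrtho_orthogonal_right.symm
  have hint : DirectSum.IsInternal V :=
    (DirectSum.isInternal_submodule_iff_isCompl V (i := true) (j := false) (by decide)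
      (by ext t; cases t <;> simp)).mpr K.isCompl_orthogonal
  refine ⟨_, inferInstance, hint.collectedOrthonormalBasis hV fun t => stdOrthonormalBasis 𝕜 (V t),
    fun ⟨t, j⟩ => ?_⟩
  have := hint.collectedOrthonormalBasis_mem hV (fun t => stdOrthonormalBasis 𝕜 (V t)) ⟨t, j⟩
  cases t
  · exact .inr this
  · exact .inl this

lemma Submodule.exists_mem_norm_eq_one {𝕜 E : Type*} [RCLike 𝕜]
    [NormedAddCommGroup E] [InnerProductSpace 𝕜 E] [FiniteDimensional 𝕜 E] {K : Submodule 𝕜 E}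
    (hK : 0 < Module.finrank 𝕜 K) : ∃ v ∈ K, ‖v‖ = 1 :=
  ⟨_, (stdOrthonormalBasis 𝕜 K ⟨0, hK⟩).2, (stdOrthonormalBasis 𝕜 K).orthonormal.1 _⟩

section CompleteSpace

variable {E : Type*} [NormedAddCommGroup E] [InnerProductSpace ℂ E] [CompleteSpace E]

@[simp] lemma ketBra_apply (a b x : E) : ketBra a b x = inner ℂ b x • a := rfl

lemma ketBra_mul (a b c d : E) :
    ketBra a b * ketBra c d = inner ℂ b c • ketBra a d := by
  ext x
  simp [smul_smul, mul_comm]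

lemma ketBra_sum_left {ι : Type*} (s : Finset ι) (a : ι → E) (b : E) :
    ketBra (∑ i ∈ s, a i) b = ∑ i ∈ s, ketBra (a i) b := by
  ext x
  simp [Finset.smul_sum]

lemma ketBra_sum_right {ι : Type*} (s : Finset ι) (a : E) (b : ι → E) :
    ketBra a (∑ i ∈ s, b i) = ∑ i ∈ s, ketBra a (b i) := by
  ext x
  simp [Finset.sum_smul]

lemma ketBra_smul_left (w : ℂ) (a b : E) : ketBra (w • a) b = w • ketBra a b := by
  ext x
  simp [smul_comm w]

lemma ketBra_smul_right (w : ℂ) (a b : E) :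
    ketBra a (w • b) = starRingEnd ℂ w • ketBra a b := by
  ext x
  simp [smul_smul, mul_comm]

noncomputable def skewKetBra (a b : E) : Module.End ℂ E := ketBra a b - ketBra b a

lemma skewKetBra_swap (a b : E) : skewKetBra b a = -skewKetBra a b := by
  simp [skewKetBra]

@[simp] lemma skewKetBra_zero_left (b : E) : skewKetBra 0 b = 0 := by
  ext
  simp [skewKetBra]

lemma skewKetBra_sum_left {ι : Type*} (s : Finset ι) (a : ι → E) (b : E) :
    skewKetBra (∑ i ∈ s, a i) b = ∑ i ∈ s, skewKetBra (a i) b := by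
  simp only [skewKetBra, ketBra_sum_left, ketBra_sum_right, Finset.sum_sub_distrib]

lemma lie_skewKetBra_skewKetBra_of_orthogonal {a c f : E} (hf : ‖f‖ = 1)
    (haf : inner ℂ a f = 0) (hcf : inner ℂ c f = 0) (hac : inner ℂ a c = 0) :
    ⁅skewKetBra c f, skewKetBra a f⁆ = skewKetBra a c := by
  have hff : inner ℂ f f = (1 : ℂ) := by simp [hf]
  simp only [Ring.lie_def, skewKetBra, sub_mul, mul_sub, ketBra_mul, hff, haf, hcf, hac,
    inner_eq_zero_symm.mp haf, inner_eq_zero_symm.mp hcf, inner_eq_zero_symm.mp hac]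
  module

lemma lie_skewKetBra_skewKetBra_smul {a b : E} (ha : ‖a‖ = 1) (hb : ‖b‖ = 1)
    (hab : inner ℂ a b = 0) (w : ℂ) :
    ⁅skewKetBra a b, skewKetBra (w • a) b⁆ = skewKetBra (w • a) a - skewKetBra (w • b) b := by
  have haa : inner ℂ a a = (1 : ℂ) := by simp [ha]
  have hbb : inner ℂ b b = (1 : ℂ) := by simp [hb]
  simp only [Ring.lie_def, skewKetBra, sub_mul, mul_sub, ketBra_mul, ketBra_smul_left,
    ketBra_smul_right, smul_mul_assoc, mul_smul_comm, haa, hbb, hab, inner_eq_zero_symm.mp hab]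
  module

lemma skewKetBra_mem_of_mem_or_mem_orthogonal {K : Submodule ℂ E}
    {L : LieSubalgebra ℝ (Module.End ℂ E)} (hgen : ∀ x ∈ K, ∀ y ∈ Kᗮ, skewKetBra x y ∈ L)
    {e f : E} (he : e ∈ K) (he1 : ‖e‖ = 1) (hf : f ∈ Kᗮ) (hf1 : ‖f‖ = 1)
    {x y : E} (hx : x ∈ K ∨ x ∈ Kᗮ) (hy : y ∈ K ∨ y ∈ Kᗮ) (hxy : inner ℂ x y = 0) :
    skewKetBra x y ∈ L := by
  rcases hx with hx | hx <;> rcases hy with hy | hy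
  · rw [← lie_skewKetBra_skewKetBra_of_orthogonal hf1 (K.inner_right_of_mem_orthogonal hx hf)
      (K.inner_right_of_mem_orthogonal hy hf) hxy]
    exact L.lie_mem (hgen y hy f hf) (hgen x hx f hf)
  · exact hgen x hx y hy
  · rw [skewKetBra_swap]
    exact neg_mem (hgen y hy x hx)
  · rw [← lie_skewKetBra_skewKetBra_of_orthogonal he1 (K.inner_left_of_mem_orthogonal he hx)
      (K.inner_left_of_mem_orthogonal he hy) hxy, skewKetBra_swap e y, skewKetBra_swap e x,
      neg_lie, lie_neg, neg_neg]
    exact L.lie_mem (hgen e he y hy) (hgen e he x hx)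

end CompleteSpace

section FiniteDimensional

variable {E : Type*} [NormedAddCommGroup E] [InnerProductSpace ℂ E] [FiniteDimensional ℂ E]

lemma adjoint_ketBra (a b : E) : adjoint (ketBra a b) = ketBra b a := by
  rw [ketBra, ContinuousLinearMap.adjoint_toLinearMap, ← rankOne_def, adjoint_rankOne]
  rfl

lemma trace_ketBra (a b : E) : trace ℂ E (ketBra a b) = inner ℂ b a :=
  trace_rankOne a b

lemma sum_ketBra_apply {ι : Type*} [Fintype ι] (X : Module.End ℂ E) (b : OrthonormalBasis ι ℂ E) :
    ∑ i, ketBra (X (b i)) (b i) = X := by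
  ext x
  simp only [LinearMap.sum_apply, ketBra_apply, ← map_smul, ← map_sum, b.sum_repr']

lemma sum_skewKetBra_apply {ι : Type*} [Fintype ι] (X : Module.End ℂ E)
    (b : OrthonormalBasis ι ℂ E) :
    ∑ i, skewKetBra (X (b i)) (b i) = X - adjoint X := by
  simp_rw [skewKetBra, Finset.sum_sub_distrib, sum_ketBra_apply, ← adjoint_ketBra (X _),
    ← map_sum, sum_ketBra_apply]

variable (E) in
noncomputable def su : LieSubalgebra ℝ (Module.End ℂ E) where
  carrier := {X | trace ℂ E X = 0 ∧ adjoint X = -X}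
  add_mem' := by
    rintro X Y ⟨hXtr, hXadj⟩ ⟨hYtr, hYadj⟩
    exact ⟨by simp [hXtr, hYtr], by rw [map_add, hXadj, hYadj, neg_add]⟩
  zero_mem' := by simp
  smul_mem' := by
    rintro r X ⟨hXtr, hXadj⟩
    refine ⟨by rw [map_smul_of_tower, hXtr, smul_zero], ?_⟩
    rw [← Complex.coe_smul, map_smulₛₗ, hXadj, Complex.conj_ofReal, smul_neg]
  lie_mem' := by
    rintro X Y ⟨-, hXadj⟩ ⟨-, hYadj⟩
    refine ⟨by rw [Ring.lie_def, map_sub, trace_mul_comm, sub_self], ?_⟩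
    simp only [← star_eq_adjoint] at hXadj hYadj ⊢
    rw [Ring.lie_def, star_sub, star_mul, star_mul, hXadj, hYadj]
    noncomm_ring

lemma skewKetBra_mem_su {a b : E} (hab : inner ℂ a b = 0) : skewKetBra a b ∈ su E := by
  refine ⟨?_, ?_⟩
  · rw [skewKetBra, map_sub, trace_ketBra, trace_ketBra, hab, inner_eq_zero_symm.mp hab, sub_zero]
  · rw [skewKetBra, map_sub, adjoint_ketBra, adjoint_ketBra, neg_sub]

variable {ι : Type*} [Fintype ι] (L : LieSubalgebra ℝ (Module.End ℂ E)) (b : OrthonormalBasis ι ℂ E)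

lemma sum_skewKetBra_smul_self_mem
    (hL : ∀ p q, p ≠ q → ∀ w : ℂ, skewKetBra (w • b p) (b q) ∈ L)
    (z : ι → ℂ) (hz : ∑ p, z p = 0) : ∑ p, skewKetBra (z p • b p) (b p) ∈ L := by
  rcases isEmpty_or_nonempty ι with hι | ⟨⟨p₀⟩⟩
  · simp [L.zero_mem]
  have hshift : ∑ p, skewKetBra (z p • b p) (b p) =
      ∑ p, (skewKetBra (z p • b p) (b p) - skewKetBra (z p • b p₀) (b p₀)) := by
    rw [Finset.sum_sub_distrib, ← skewKetBra_sum_left, ← Finset.sum_smul, hz, zero_smul,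
      skewKetBra_zero_left, sub_zero]
  rw [hshift]
  refine sum_mem fun p _ => ?_
  rcases eq_or_ne p p₀ with rfl | hp
  · rw [sub_self]
    exact L.zero_mem
  rw [← lie_skewKetBra_skewKetBra_smul (b.orthonormal.1 p) (b.orthonormal.1 p₀)
    (b.orthonormal.2 hp)]
  exact L.lie_mem (by simpa using hL p p₀ hp 1) (hL p p₀ hp (z p))

lemma su_le_of_skewKetBra_mem
    (hL : ∀ p q, p ≠ q → ∀ w : ℂ, skewKetBra (w • b p) (b q) ∈ L) : su E ≤ L := by
  classical
  rintro X ⟨htr, hadj⟩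
  set z : ι → ι → ℂ := fun p q => inner ℂ (b p) (X (b q))
  have hX : X = (2⁻¹ : ℝ) • ∑ q, ∑ p, skewKetBra (z p q • b p) (b q) := by
    simp_rw [z, ← skewKetBra_sum_left, b.sum_repr', sum_skewKetBra_apply, hadj, sub_neg_eq_add,
      ← two_smul ℝ X, smul_smul]
    norm_num
  have hoff : ∀ q, ∑ p ∈ Finset.univ.erase q, skewKetBra (z p q • b p) (b q) ∈ L :=
    fun q => sum_mem fun p hp => hL p q (Finset.ne_of_mem_erase hp) _
  have hdiag : ∑ q, skewKetBra (z q q • b q) (b q) ∈ L :=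
    sum_skewKetBra_smul_self_mem L b hL _ (by rw [← trace_eq_sum_inner X b, htr])
  rw [hX]
  refine L.smul_mem _ ?_
  rw [Finset.sum_congr rfl fun q _ => (Finset.sum_erase_add _ _ (Finset.mem_univ q)).symm,
    Finset.sum_add_distrib]
  exact add_mem (sum_mem fun q _ => hoff q) hdiag

end FiniteDimensional

/-- Let `E = H₁ ⊕ H₁ᗮ` be an orthogonal decomposition of a finite-dimensional
complex inner product space with `dim H₁ ≥ dim H₁ᗮ ≥ 1`. The real Lie algebra
generated by the operators `|ψ₁⟩⟨ψ₂| − |ψ₂⟩⟨ψ₁|` with `ψ₁ ∈ H₁`, `ψ₂ ∈ H₁ᗮ`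
is `su(E)`, the Lie algebra of traceless anti-Hermitian operators. -/
theorem lieSpan_ketBra_eq_su {E : Type*} [NormedAddCommGroup E] [InnerProductSpace ℂ E]
    [FiniteDimensional ℂ E] (H₁ : Submodule ℂ E)
    (hle : Module.finrank ℂ H₁ᗮ ≤ Module.finrank ℂ H₁)
    (hpos : 1 ≤ Module.finrank ℂ H₁ᗮ) :
    (LieSubalgebra.lieSpan ℝ (Module.End ℂ E)
        {X | ∃ ψ₁ ∈ H₁, ∃ ψ₂ ∈ H₁ᗮ, X = ketBra ψ₁ ψ₂ - ketBra ψ₂ ψ₁} :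
      Set (Module.End ℂ E)) =
      {X : Module.End ℂ E | LinearMap.trace ℂ E X = 0 ∧ LinearMap.adjoint X = -X} := by
  set L := LieSubalgebra.lieSpan ℝ (Module.End ℂ E)
    {X | ∃ ψ₁ ∈ H₁, ∃ ψ₂ ∈ H₁ᗮ, X = ketBra ψ₁ ψ₂ - ketBra ψ₂ ψ₁}
  have hgen : ∀ x ∈ H₁, ∀ y ∈ H₁ᗮ, skewKetBra x y ∈ L :=
    fun x hx y hy => LieSubalgebra.subset_lieSpan ⟨x, hx, y, hy, rfl⟩
  have hL_le : L ≤ su E := LieSubalgebra.lieSpan_le.mpr <| by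
    rintro _ ⟨x, hx, y, hy, rfl⟩
    exact skewKetBra_mem_su (H₁.inner_right_of_mem_orthogonal hx hy)
  obtain ⟨e, he, he1⟩ := Submodule.exists_mem_norm_eq_one (hpos.trans hle)
  obtain ⟨f, hf, hf1⟩ := Submodule.exists_mem_norm_eq_one hpos
  obtain ⟨ι, _, b, hb⟩ := H₁.exists_orthonormalBasis_mem_or_mem_orthogonal
  have hsu_le : su E ≤ L := su_le_of_skewKetBra_mem L b fun p q hpq w =>
    skewKetBra_mem_of_mem_or_mem_orthogonal hgen he he1 hf hf1
      ((hb p).imp (Submodule.smul_mem _ w) (Submodule.smul_mem _ w)) (hb q)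
      (by rw [inner_smul_left, b.orthonormal.2 hpq, mul_zero])
  exact congrArg SetLike.coe (le_antisymm hL_le hsu_le)
end
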